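/- Suppose exactly one IRS i ∈ 𝒥 is associated with user k, so the average SINR of user k as a function of the (real) number M ≥ 0 of reflecting elements per IRS is γ_k(M) = P_k(α²_{k,k} + M·B_k + (π² M²/16) q²_{k,i,k}) / (D_k + M·C_k), where B_k = Σ_{j∈𝒥} q²_{k,j,k} + (π^{3/2} α_{k,k}/4) q_{k,i,k} − q²_{k,i,k}, C_k = Σ_{n∈𝒦,n≠k} P_n Σ_{j∈𝒥} q²_{n,j,k}, and D_k = σ² + Σ_{n∈𝒦,n≠k} P_n α²_{n,k}. If C_k·α²_{k,k} > B_k·D_k, then with M* = √(D_k²/C_k² + 16(C_k·α²_{k,k} − B_k·D_k)/(π² q²_{k,i,k} C_k)) − D_k/C_k, the function γ_k is strictly decreasing on [0, M*] and strictly increasing on [M*, ∞). (Proposition 3, non-monotone case.) -/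

import Mathlib

/-!
Writing the SINR as `(a + b M + c M²) / (d + e M)` with `c, e > 0`, the numerator of its
derivative is the quadratic `c e ((M + d/e)² - s)` with `s = (d/e)² + (a e - b d)/(c e)`. So on
the half-line `M > -d/e`, where the denominator is positive, the function decreases up to
`√s - d/e` and increases afterwards. The hypothesis `C α² > B D` gives `s > (d/e)²`, which puts
this turning point `M*` to the right of `0`.
-/

open Real Set

section QuadraticDivLinear

variable {a b c d e : ℝ}

theorem hasDerivAt_quadratic_div_linear (hc : c ≠ 0) (he : e ≠ 0) {x : ℝ}
    (hx : d + e * x ≠ 0) :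
    HasDerivAt (fun x => (a + b * x + c * x ^ 2) / (d + e * x))
      (c * e * ((x + d / e) ^ 2 - ((d / e) ^ 2 + (a * e - b * d) / (c * e))) / (d + e * x) ^ 2)
      x := by
  have hnum : HasDerivAt (fun x => a + b * x + c * x ^ 2) (b * 1 + c * (↑2 * x ^ (2 - 1))) x :=
    (((hasDerivAt_id' x).const_mul b).const_add a).add ((hasDerivAt_pow 2 x).const_mul c)
  have hden : HasDerivAt (fun x => d + e * x) (e * 1) x :=
    ((hasDerivAt_id' x).const_mul e).const_add d
  refine (hnum.fun_div hden hx).congr_deriv ?_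
  congr 1
  field_simp
  ring

theorem linear_pos_of_neg_div_lt (he : 0 < e) {x : ℝ} (hx : -(d / e) < x) : 0 < d + e * x := by
  have h := mul_pos he (neg_lt_iff_pos_add.1 hx)
  rwa [mul_add, mul_div_cancel₀ d he.ne', add_comm] at h

theorem continuousOn_quadratic_div_linear (he : 0 < e) :
    ContinuousOn (fun x => (a + b * x + c * x ^ 2) / (d + e * x)) (Ioi (-(d / e))) :=
  ContinuousOn.div (by fun_prop) (by fun_prop) fun _ hx => (linear_pos_of_neg_div_lt he hx).ne'

theorem strictAntiOn_quadratic_div_linear (hc : 0 < c) (he : 0 < e) :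
    StrictAntiOn (fun x => (a + b * x + c * x ^ 2) / (d + e * x))
      (Ioc (-(d / e)) (√((d / e) ^ 2 + (a * e - b * d) / (c * e)) - d / e)) := by
  set s := (d / e) ^ 2 + (a * e - b * d) / (c * e)
  refine strictAntiOn_of_deriv_neg (convex_Ioc _ _)
    ((continuousOn_quadratic_div_linear he).mono Ioc_subset_Ioi_self) fun x hx => ?_
  rw [interior_Ioc] at hx
  have hden := linear_pos_of_neg_div_lt he hx.1
  have hshift : 0 < x + d / e := by linarith [hx.1]
  have hsq : (x + d / e) ^ 2 < s := (lt_sqrt hshift.le).1 (by linarith [hx.2])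
  rw [(hasDerivAt_quadratic_div_linear hc.ne' he.ne' hden.ne').deriv]
  exact div_neg_of_neg_of_pos (mul_neg_of_pos_of_neg (by positivity) (by linarith)) (by positivity)

theorem strictMonoOn_quadratic_div_linear (hc : 0 < c) (he : 0 < e)
    (hs : 0 < (d / e) ^ 2 + (a * e - b * d) / (c * e)) :
    StrictMonoOn (fun x => (a + b * x + c * x ^ 2) / (d + e * x))
      (Ici (√((d / e) ^ 2 + (a * e - b * d) / (c * e)) - d / e)) := by
  set s := (d / e) ^ 2 + (a * e - b * d) / (c * e)
  have hsqrt : 0 < √s := sqrt_pos.2 hs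
  have hpole : Ici (√s - d / e) ⊆ Ioi (-(d / e)) := fun x hx => by
    simp only [mem_Ici, mem_Ioi] at hx ⊢; linarith
  refine strictMonoOn_of_deriv_pos (convex_Ici _)
    ((continuousOn_quadratic_div_linear he).mono hpole) fun x hx => ?_
  rw [interior_Ici] at hx
  have hden := linear_pos_of_neg_div_lt he (hpole (mem_Ici_of_Ioi hx))
  have hshift : √s < x + d / e := by linarith [mem_Ioi.1 hx]
  have hsq : s < (x + d / e) ^ 2 := (sqrt_lt' (hsqrt.trans hshift)).1 hshift
  rw [(hasDerivAt_quadratic_div_linear hc.ne' he.ne' hden.ne').deriv]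
  exact div_pos (mul_pos (by positivity) (by linarith)) (by positivity)

end QuadraticDivLinear

theorem Finset.sum_erase_univ_pos {K : Type*} [Fintype K] [DecidableEq K]
    (hK : 1 < Fintype.card K) (k : K) {f : K → ℝ} (hf : ∀ n, 0 < f n) :
    0 < ∑ n ∈ Finset.univ.erase k, f n :=
  have ⟨n, hn⟩ := Fintype.exists_ne_of_one_lt_card hK k
  Finset.sum_pos (fun n _ => hf n) ⟨n, Finset.mem_erase.2 ⟨hn, Finset.mem_univ n⟩⟩

theorem stmt_4_general
    {K J : Type*} [Fintype K] [DecidableEq K] [Fintype J]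
    (hK : 1 < Fintype.card K)
    (P : K → ℝ) (hP : ∀ n, 0 < P n)
    (σ2 : ℝ) (hσ : 0 < σ2)
    (α : K → K → ℝ)
    (q : K → J → K → ℝ) (hq : ∀ n j k, 0 < q n j k)
    (k : K) (i : J)
    (B C D : ℝ)
    (hC : C = ∑ n ∈ Finset.univ.erase k, P n * ∑ j, (q n j k) ^ 2)
    (hD : D = σ2 + ∑ n ∈ Finset.univ.erase k, P n * (α n k) ^ 2)
    (γ : ℝ → ℝ)
    (hγ : ∀ M : ℝ, γ M =
      P k * ((α k k) ^ 2 + M * B + Real.pi ^ 2 * M ^ 2 / 16 * (q k i k) ^ 2) / (D + M * C))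
    (hcond : C * (α k k) ^ 2 > B * D)
    (Mstar : ℝ)
    (hMstar : Mstar = Real.sqrt (D ^ 2 / C ^ 2
      + 16 * (C * (α k k) ^ 2 - B * D) / (Real.pi ^ 2 * (q k i k) ^ 2 * C)) - D / C) :
    StrictAntiOn γ (Set.Icc 0 Mstar) ∧ StrictMonoOn γ (Set.Ici Mstar) := by
  have hC0 : 0 < C := hC ▸ Finset.sum_erase_univ_pos hK k fun n => mul_pos (hP n) <|
    Finset.sum_pos' (fun j _ => sq_nonneg _) ⟨i, Finset.mem_univ i, pow_pos (hq n i k) 2⟩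
  have hD0 : 0 < D := hD ▸ add_pos_of_pos_of_nonneg hσ
    (Finset.sum_nonneg fun n _ => mul_nonneg (hP n).le (sq_nonneg _))
  have hPk := hP k
  have hqk := hq k i k
  set c := P k * (π ^ 2 * q k i k ^ 2 / 16) with hc_def
  have hγ_eq : γ = fun x => (P k * α k k ^ 2 + P k * B * x + c * x ^ 2) / (D + C * x) :=
    funext fun M => by rw [hγ]; ring
  have hs : (D / C) ^ 2 + (P k * α k k ^ 2 * C - P k * B * D) / (c * C)
      = D ^ 2 / C ^ 2 + 16 * (C * α k k ^ 2 - B * D) / (π ^ 2 * q k i k ^ 2 * C) := by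
    rw [hc_def]
    field_simp
  have hs_pos : 0 < (D / C) ^ 2 + (P k * α k k ^ 2 * C - P k * B * D) / (c * C) := by
    rw [hs]
    exact add_pos_of_nonneg_of_pos (by positivity) (div_pos (by linarith) (by positivity))
  rw [← hs] at hMstar
  subst hγ_eq hMstar
  have hc : 0 < c := by positivity
  exact ⟨(strictAntiOn_quadratic_div_linear hc hC0).mono
      (Icc_subset_Ioc_left (neg_neg_of_pos (div_pos hD0 hC0))),
    strictMonoOn_quadratic_div_linear hc hC0 hs_pos⟩

/-- Proposition 3 (non-monotone case): with exactly one IRS `i` associated with user `k`,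
if `C_k α²_{k,k} > B_k D_k`, then the average SINR `γ` of user `k` first strictly
decreases on `[0, M*]` and then strictly increases on `[M*, ∞)`, where
`M* = √(D²/C² + 16(C α² − B D)/(π² q²_{k,i,k} C)) − D/C`. -/
theorem stmt_4
    {K J : Type*} [Fintype K] [DecidableEq K] [Fintype J] [Nonempty J]
    (hK : 1 < Fintype.card K)
    (P : K → ℝ) (hP : ∀ n, 0 < P n)
    (σ2 : ℝ) (hσ : 0 < σ2)
    (α : K → K → ℝ) (hα : ∀ n k, 0 < α n k)
    (q : K → J → K → ℝ) (hq : ∀ n j k, 0 < q n j k)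
    (k : K) (i : J)
    (B C D : ℝ)
    (hB : B = ∑ j, (q k j k) ^ 2
      + Real.pi * Real.sqrt Real.pi * α k k / 4 * q k i k - (q k i k) ^ 2)
    (hC : C = ∑ n ∈ Finset.univ.erase k, P n * ∑ j, (q n j k) ^ 2)
    (hD : D = σ2 + ∑ n ∈ Finset.univ.erase k, P n * (α n k) ^ 2)
    (γ : ℝ → ℝ)
    (hγ : ∀ M : ℝ, γ M =
      P k * ((α k k) ^ 2 + M * B + Real.pi ^ 2 * M ^ 2 / 16 * (q k i k) ^ 2) / (D + M * C))
    (hcond : C * (α k k) ^ 2 > B * D)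
    (Mstar : ℝ)
    (hMstar : Mstar = Real.sqrt (D ^ 2 / C ^ 2
      + 16 * (C * (α k k) ^ 2 - B * D) / (Real.pi ^ 2 * (q k i k) ^ 2 * C)) - D / C) :
    StrictAntiOn γ (Set.Icc 0 Mstar) ∧ StrictMonoOn γ (Set.Ici Mstar) :=
  stmt_4_general hK P hP σ2 hσ α q hq k i B C D hC hD γ hγ hcond Mstar hMstar
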